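/- Let S be a nonempty closed convex subset of ℝ^{d1×d2} (with the Frobenius inner product), let f be convex and differentiable with ‖∇f(X) − ∇f(Y)‖_F ≤ L‖X−Y‖_F for all X, Y (L > 0), and let M̂ be a minimizer of f over S. Fix k ≥ 1, set a_k = 2/(k+1), and suppose M_{k−1} ∈ S, V_{k−1} ∈ ℝ^{d1×d2}, Z_{k−1} = (1 − a_k)M_{k−1} + a_k V_{k−1}, M_k = Π_S(Z_{k−1} − (1/L)∇f(Z_{k−1})), and V_k = M_{k−1} + (1/a_k)(M_k − M_{k−1}). Then (1/a_k²)(f(M_k) − f(M̂)) + (L/2)‖V_k − M̂‖_F² ≤ ((1 − a_k)/a_k²)(f(M_{k−1}) − f(M̂)) + (L/2)‖V_{k−1} − M̂‖_F². -/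

import Mathlib

open scoped RealInnerProductSpace

/-!
Compare `M_k` with the feasible point `x = (1 - a_k) M_{k-1} + a_k M̂`. For a projected gradient
step `m = Π_S(z - ∇f(z)/L)` and any `x ∈ S`, the descent lemma at `z`, the supporting hyperplane
of `f` at `z` and the variational inequality of the projection combine to
`f m ≤ f x + (L/2)(‖x - z‖² - ‖x - m‖²)`. With `z = Z_{k-1}` and `m = M_k` one has
`x - Z_{k-1} = a_k (M̂ - V_{k-1})` and `x - M_k = a_k (M̂ - V_k)`, so after bounding `f x` by
convexity and dividing by `a_k²` the inequality follows.
-/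

section

variable {E : Type*} [NormedAddCommGroup E] [InnerProductSpace ℝ E]

theorem inner_sub_nonpos_of_forall_norm_sub_le {S : Set E} (hconv : Convex ℝ S) {p m : E}
    (hm : m ∈ S) (hproj : ∀ x ∈ S, ‖m - p‖ ≤ ‖x - p‖) {x : E} (hx : x ∈ S) :
    ⟪p - m, x - m⟫ ≤ 0 := by
  have : Nonempty S := ⟨⟨m, hm⟩⟩
  have hinf : ‖p - m‖ = ⨅ w : S, ‖p - w‖ :=
    le_antisymm (le_ciInf fun w => by simpa only [norm_sub_rev p] using hproj w w.2)
      (ciInf_le ⟨0, Set.forall_mem_range.2 fun _ => norm_nonneg _⟩ (⟨m, hm⟩ : S))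
  exact (norm_eq_iInf_iff_real_inner_le_zero hconv hm).1 hinf x hx

variable [CompleteSpace E] {f : E → ℝ}

theorem HasGradientAt.hasDerivAt_comp_add_smul {g x v : E} {t : ℝ}
    (h : HasGradientAt f g (x + t • v)) :
    HasDerivAt (fun s : ℝ => f (x + s • v)) ⟪g, v⟫ t := by
  have hline : HasDerivAt (fun s : ℝ => x + s • v) v t := by
    simpa using ((hasDerivAt_id t).smul_const v).const_add x
  exact h.hasFDerivAt.comp_hasDerivAt t hline

theorem ConvexOn.add_inner_le_of_hasGradientAt (hf : ConvexOn ℝ Set.univ f) {g x : E}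
    (hg : HasGradientAt f g x) (y : E) : f x + ⟪g, y - x⟫ ≤ f y := by
  have hline : ConvexOn ℝ Set.univ (fun t : ℝ => f (x + t • (y - x))) :=
    hf.comp_affineMap (AffineMap.const ℝ ℝ x + (LinearMap.toSpanSingleton ℝ E (y - x)).toAffineMap)
  have hslope := hline.le_slope_of_hasDerivAt (Set.mem_univ 0) (Set.mem_univ 1) one_pos
    (HasGradientAt.hasDerivAt_comp_add_smul (t := 0) (by simpa using hg))
  simp only [slope_def_field, one_smul, add_sub_cancel, zero_smul, add_zero, sub_zero,
    div_one] at hslope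
  linarith

theorem le_add_inner_add_sq_of_lipschitz_gradient {f' : E → E}
    (hgrad : ∀ x, HasGradientAt f (f' x) x) {L : ℝ}
    (hlip : ∀ x y, ‖f' x - f' y‖ ≤ L * ‖x - y‖) (x y : E) :
    f y ≤ f x + ⟪f' x, y - x⟫ + L / 2 * ‖y - x‖ ^ 2 := by
  set v := y - x
  let ψ : ℝ → ℝ := fun t => f (x + t • v) - t * ⟪f' x, v⟫ - L / 2 * t ^ 2 * ‖v‖ ^ 2
  have hψ (t : ℝ) : HasDerivAt ψ (⟪f' (x + t • v) - f' x, v⟫ - L * t * ‖v‖ ^ 2) t := by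
    refine ((((hgrad (x + t • v)).hasDerivAt_comp_add_smul).sub
      ((hasDerivAt_id t).mul_const ⟪f' x, v⟫)).sub
      (((hasDerivAt_pow 2 t).const_mul (L / 2)).mul_const (‖v‖ ^ 2))).congr_deriv ?_
    rw [inner_sub_left]; push_cast; ring
  have hψ_nonpos (t : ℝ) (ht : 0 ≤ t) : ⟪f' (x + t • v) - f' x, v⟫ - L * t * ‖v‖ ^ 2 ≤ 0 := by
    have hstep : ‖f' (x + t • v) - f' x‖ ≤ L * t * ‖v‖ := by
      simpa [norm_smul, abs_of_nonneg ht, mul_assoc] using hlip (x + t • v) x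
    nlinarith [real_inner_le_norm (f' (x + t • v) - f' x) v, norm_nonneg v]
  have hanti : AntitoneOn ψ (Set.Icc 0 1) :=
    antitoneOn_of_hasDerivWithinAt_nonpos (convex_Icc 0 1)
      (fun t _ => (hψ t).continuousAt.continuousWithinAt)
      (fun t _ => (hψ t).hasDerivWithinAt)
      (fun t ht => hψ_nonpos t (interior_subset ht).1)
  have h01 := hanti (Set.left_mem_Icc.2 zero_le_one) (Set.right_mem_Icc.2 zero_le_one) zero_le_one
  simp only [ψ, v, one_smul, add_sub_cancel, one_mul, one_pow, mul_one, zero_smul, add_zero,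
    zero_mul, sub_zero, ne_eq, OfNat.ofNat_ne_zero, not_false_eq_true, zero_pow, mul_zero] at h01
  linarith

theorem le_add_sq_sub_sq_of_projected_gradient_step {f' : E → E}
    (hf : ConvexOn ℝ Set.univ f) (hgrad : ∀ x, HasGradientAt f (f' x) x) {L : ℝ} (hL : 0 < L)
    (hlip : ∀ x y, ‖f' x - f' y‖ ≤ L * ‖x - y‖) {S : Set E} (hconv : Convex ℝ S) {z m : E}
    (hm : m ∈ S) (hproj : ∀ x ∈ S, ‖m - (z - (1 / L) • f' z)‖ ≤ ‖x - (z - (1 / L) • f' z)‖)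
    {x : E} (hx : x ∈ S) :
    f m ≤ f x + L / 2 * (‖x - z‖ ^ 2 - ‖x - m‖ ^ 2) := by
  have hdescent := le_add_inner_add_sq_of_lipschitz_gradient hgrad hlip z m
  have hsupport := hf.add_inner_le_of_hasGradientAt (hgrad z) x
  have hvi := inner_sub_nonpos_of_forall_norm_sub_le hconv hm hproj hx
  rw [show z - (1 / L) • f' z - m = -((m - z) + (1 / L) • f' z) by abel, inner_neg_left,
    inner_add_left, real_inner_smul_left, neg_nonpos] at hvi
  have hvi' : ⟪f' z, m - x⟫ ≤ L * ⟪m - z, x - m⟫ := by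
    have := mul_nonneg hL.le hvi
    rw [mul_add, ← mul_assoc, mul_one_div_cancel hL.ne', one_mul] at this
    rw [← neg_sub x m, inner_neg_right]
    linarith
  have hsplit : ⟪f' z, m - z⟫ = ⟪f' z, m - x⟫ + ⟪f' z, x - z⟫ := by
    rw [← inner_add_right, sub_add_sub_cancel]
  have hsq : ‖x - z‖ ^ 2 = ‖x - m‖ ^ 2 + 2 * ⟪m - z, x - m⟫ + ‖m - z‖ ^ 2 := by
    rw [← sub_add_sub_cancel x m z, norm_add_sq_real, real_inner_comm, norm_sub_rev m z]
  rw [hsq]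
  linarith

end

theorem accelerated_one_step_general (d1 d2 : ℕ)
    (S : Set (EuclideanSpace ℝ (Fin d1 × Fin d2)))
    (hconv : Convex ℝ S)
    (f : EuclideanSpace ℝ (Fin d1 × Fin d2) → ℝ)
    (f' : EuclideanSpace ℝ (Fin d1 × Fin d2) → EuclideanSpace ℝ (Fin d1 × Fin d2))
    (hf : ConvexOn ℝ Set.univ f)
    (hgrad : ∀ x, HasGradientAt f (f' x) x)
    (L : ℝ) (hL : 0 < L)
    (hlip : ∀ x y, ‖f' x - f' y‖ ≤ L * ‖x - y‖)
    (Mhat : EuclideanSpace ℝ (Fin d1 × Fin d2))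
    (hMhatS : Mhat ∈ S)
    (k : ℕ) (hk : 1 ≤ k)
    (ak : ℝ) (hak : ak = 2 / ((k : ℝ) + 1))
    (Mkm1 Vkm1 Zkm1 Mk Vk : EuclideanSpace ℝ (Fin d1 × Fin d2))
    (hMkm1 : Mkm1 ∈ S)
    (hZkm1 : Zkm1 = (1 - ak) • Mkm1 + ak • Vkm1)
    (hMkS : Mk ∈ S)
    (hMkproj : ∀ x ∈ S,
      ‖Mk - (Zkm1 - (1 / L) • f' Zkm1)‖ ≤ ‖x - (Zkm1 - (1 / L) • f' Zkm1)‖)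
    (hVk : Vk = Mkm1 + (1 / ak) • (Mk - Mkm1)) :
    1 / ak ^ 2 * (f Mk - f Mhat) + L / 2 * ‖Vk - Mhat‖ ^ 2 ≤
      (1 - ak) / ak ^ 2 * (f Mkm1 - f Mhat) + L / 2 * ‖Vkm1 - Mhat‖ ^ 2 := by
  have ha0 : 0 < ak := by rw [hak]; positivity
  have ha1 : ak ≤ 1 := by
    rw [hak, div_le_one (by positivity)]
    exact_mod_cast Nat.succ_le_succ hk
  set x := (1 - ak) • Mkm1 + ak • Mhat
  have hxS : x ∈ S := hconv hMkm1 hMhatS (sub_nonneg.2 ha1) ha0.le (sub_add_cancel 1 ak)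
  have hfx : f x ≤ (1 - ak) * f Mkm1 + ak * f Mhat :=
    hf.2 (Set.mem_univ _) (Set.mem_univ _) (sub_nonneg.2 ha1) ha0.le (sub_add_cancel 1 ak)
  have hstep := le_add_sq_sub_sq_of_projected_gradient_step hf hgrad hL hlip hconv hMkS hMkproj hxS
  have hxZ : ‖x - Zkm1‖ = ak * ‖Vkm1 - Mhat‖ := by
    rw [show x - Zkm1 = ak • (Mhat - Vkm1) by rw [hZkm1]; module, norm_smul,
      Real.norm_of_nonneg ha0.le, norm_sub_rev]
  have hxM : ‖x - Mk‖ = ak * ‖Vk - Mhat‖ := by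
    have hMk : Mk = (1 - ak) • Mkm1 + ak • Vk := by
      rw [hVk, smul_add, smul_smul, mul_one_div_cancel ha0.ne', one_smul]; module
    rw [show x - Mk = ak • (Mhat - Vk) by rw [hMk]; module, norm_smul,
      Real.norm_of_nonneg ha0.le, norm_sub_rev]
  rw [hxZ, hxM] at hstep
  field_simp
  linarith

/-- One-step inequality for accelerated projected gradient descent: with `a_k = 2/(k+1)`,
`Z_{k−1} = (1 − a_k)M_{k−1} + a_k V_{k−1}`, `M_k = Π_S(Z_{k−1} − (1/L)∇f(Z_{k−1}))` and
`V_k = M_{k−1} + (1/a_k)(M_k − M_{k−1})`, one has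
`(1/a_k²)(f(M_k) − f(M̂)) + (L/2)‖V_k − M̂‖² ≤ ((1−a_k)/a_k²)(f(M_{k−1}) − f(M̂)) + (L/2)‖V_{k−1} − M̂‖²`. -/
theorem accelerated_one_step (d1 d2 : ℕ)
    (S : Set (EuclideanSpace ℝ (Fin d1 × Fin d2)))
    (hne : S.Nonempty) (hcl : IsClosed S) (hconv : Convex ℝ S)
    (f : EuclideanSpace ℝ (Fin d1 × Fin d2) → ℝ)
    (f' : EuclideanSpace ℝ (Fin d1 × Fin d2) → EuclideanSpace ℝ (Fin d1 × Fin d2))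
    (hf : ConvexOn ℝ Set.univ f)
    (hgrad : ∀ x, HasGradientAt f (f' x) x)
    (L : ℝ) (hL : 0 < L)
    (hlip : ∀ x y, ‖f' x - f' y‖ ≤ L * ‖x - y‖)
    (Mhat : EuclideanSpace ℝ (Fin d1 × Fin d2))
    (hMhatS : Mhat ∈ S) (hMhatmin : ∀ x ∈ S, f Mhat ≤ f x)
    (k : ℕ) (hk : 1 ≤ k)
    (ak : ℝ) (hak : ak = 2 / ((k : ℝ) + 1))
    (Mkm1 Vkm1 Zkm1 Mk Vk : EuclideanSpace ℝ (Fin d1 × Fin d2))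
    (hMkm1 : Mkm1 ∈ S)
    (hZkm1 : Zkm1 = (1 - ak) • Mkm1 + ak • Vkm1)
    (hMkS : Mk ∈ S)
    (hMkproj : ∀ x ∈ S,
      ‖Mk - (Zkm1 - (1 / L) • f' Zkm1)‖ ≤ ‖x - (Zkm1 - (1 / L) • f' Zkm1)‖)
    (hVk : Vk = Mkm1 + (1 / ak) • (Mk - Mkm1)) :
    1 / ak ^ 2 * (f Mk - f Mhat) + L / 2 * ‖Vk - Mhat‖ ^ 2 ≤
      (1 - ak) / ak ^ 2 * (f Mkm1 - f Mhat) + L / 2 * ‖Vkm1 - Mhat‖ ^ 2 :=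
  accelerated_one_step_general d1 d2 S hconv f f' hf hgrad L hL hlip Mhat hMhatS k hk ak hak Mkm1
    Vkm1 Zkm1 Mk Vk hMkm1 hZkm1 hMkS hMkproj hVk
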